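/- Let G be a loopless multigraph with maximum degree Δ ≥ 1, and suppose the subgraph of the support of G induced by the set of all vertices of maximum degree Δ is bipartite. Then there exists a matching of G that saturates every vertex of maximum degree. -/

import Mathlib

/-!
A set `S` of vertices of maximum degree `Δ` carries `Δ * #S` edge ends, all leading to the
neighbourhood of `S`, whose vertices take at most `Δ` of them each. So Hall's condition holds and
each maximum-degree vertex `z` gets its own neighbour `f z`. Along the paths and cycles of `f`,
a vertex outside the image of `f` is matched to its image and both are removed; once `f`
permutes what is left, the bipartition makes `f` alternate sides, and the edges `z — f z` from
one side form a matching covering the rest.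
-/

open scoped Classical

namespace NSBPaper

variable {V : Type} [Fintype V] [DecidableEq V]

/-- Degree of a vertex in a loopless multigraph given by multiplicity function `w`. -/
def deg (w : V → V → ℕ) (v : V) : ℕ := ∑ u, w v u

/-- Maximum degree of the multigraph. -/
def maxDeg (w : V → V → ℕ) : ℕ := Finset.univ.sup fun v => deg w v

/-- The support simple graph of a multigraph: `u` and `v` are adjacent iff `u ≠ v`
and there is at least one multi-edge between them. -/
def support (w : V → V → ℕ) : SimpleGraph V where
  Adj u v := u ≠ v ∧ 1 ≤ w u v ∧ 1 ≤ w v u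
  symm := ⟨fun u v h => ⟨h.1.symm, h.2.2, h.2.1⟩⟩
  loopless := ⟨fun v h => h.1 rfl⟩

/-- A set of unordered pairs `M` saturates a vertex `v` if some pair of `M` contains `v`. -/
def Saturates (M : Finset (Sym2 V)) (v : V) : Prop := ∃ e ∈ M, v ∈ e

/-- `M` is a matching of the multigraph `w`: its elements are non-loop edges of the
support, and no two distinct elements share a vertex. -/
def IsMatching (w : V → V → ℕ) (M : Finset (Sym2 V)) : Prop :=
  (∀ e ∈ M, ¬ e.IsDiag) ∧
  (∀ u v : V, s(u, v) ∈ M → 1 ≤ w u v) ∧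
  (∀ e ∈ M, ∀ f ∈ M, e ≠ f → ∀ x : V, x ∈ e → x ∉ f)

/-- `M` is a maximal matching of `w`: no pair can be added keeping it a matching. -/
def IsMaximalMatching (w : V → V → ℕ) (M : Finset (Sym2 V)) : Prop :=
  IsMatching w M ∧ ∀ e : Sym2 V, e ∉ M → ¬ IsMatching w (insert e M)

/-- Removing a matching `M` from the multigraph `w`: the multiplicity of each pair in `M`
decreases by one. -/
def removeMatching (w : V → V → ℕ) (M : Finset (Sym2 V)) : V → V → ℕ :=
  fun u v => if s(u, v) ∈ M then w u v - 1 else w u v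

/-- The subgraph of `G` induced by `Z` is bipartite: there is a set `A` such that every
edge of `G` inside `Z` joins `A` to its complement. -/
def BipartiteOn (G : SimpleGraph V) (Z : Set V) : Prop :=
  ∃ A : Set V, ∀ ⦃u v : V⦄, u ∈ Z → v ∈ Z → G.Adj u v → (u ∈ A ↔ v ∉ A)

/-- The edge multiset of `w` can be partitioned into `T` matchings. -/
def CanEvacuate (w : V → V → ℕ) (T : ℕ) : Prop :=
  ∃ M : Fin T → Finset (Sym2 V),
    (∀ j, IsMatching w (M j)) ∧
    ∀ u v : V, (Finset.univ.filter fun j => s(u, v) ∈ M j).card = w u v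

/-- The vertex-weight of a matching: the sum of the weights of its saturated vertices. -/
noncomputable def matchWeight (φ : V → ℕ) (M : Finset (Sym2 V)) : ℕ :=
  ∑ v : V, if Saturates M v then φ v else 0

/-- `Rfun M k i = 1` iff vertex `i` is saturated by the matching chosen in slot `k`. -/
noncomputable def Rfun (M : ℕ → Finset (Sym2 V)) (k : ℕ) (i : V) : ℕ :=
  if Saturates (M k) i then 1 else 0

/-- `Ufun M k i` is `R i (k-1) * R i (k-2)` if `k ≡ 2 [MOD 3]` and `R i (k-1)` otherwise,
with `R i k = 0` for `k < 0`. -/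
noncomputable def Ufun (M : ℕ → Finset (Sym2 V)) (k : ℕ) (i : V) : ℕ :=
  if k = 0 then 0
  else if k % 3 = 2 then Rfun M (k - 1) i * Rfun M (k - 2) i
  else Rfun M (k - 1) i

/-- Vertex `i` is heavy in `w`: `n * d(i) ≥ (n - 1) * Δ`. -/
def Heavy (w : V → V → ℕ) (i : V) : Prop :=
  (Fintype.card V - 1) * maxDeg w ≤ Fintype.card V * deg w i

/-- Vertex `i` is critical in `w`: its degree is the maximum degree. -/
def Critical (w : V → V → ℕ) (i : V) : Prop := deg w i = maxDeg w

/-- The NSB weight of vertex `i`, where `u i` records whether `i` received enough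
service previously. -/
noncomputable def nsbWeight (w : V → V → ℕ) (u : V → ℕ) (i : V) : ℕ :=
  if Heavy w i then deg w i * (2 - u i) else deg w i

/-- The LC-NSB weight of vertex `i`. -/
noncomputable def lcnsbWeight (w : V → V → ℕ) (u : V → ℕ) (i : V) : ℕ :=
  if Critical w i then 5 - 2 * u i
  else if Heavy w i then 4 - 2 * u i
  else 1

/-- An NSB evacuation run on the initial multigraph `w0`: in each slot `k`, a matching
`M k` of `G k` maximizing the total NSB weight of saturated vertices is removed. -/
structure NSBRun (w0 : V → V → ℕ) where
  G : ℕ → V → V → ℕ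
  M : ℕ → Finset (Sym2 V)
  init : G 0 = w0
  step : ∀ k, G (k + 1) = removeMatching (G k) (M k)
  matching : ∀ k, IsMatching (G k) (M k)
  opt : ∀ k, ∀ M' : Finset (Sym2 V), IsMatching (G k) M' →
    matchWeight (nsbWeight (G k) (Ufun M k)) M' ≤ matchWeight (nsbWeight (G k) (Ufun M k)) (M k)

/-- An LC-NSB evacuation run on the initial multigraph `w0`. -/
structure LCNSBRun (w0 : V → V → ℕ) where
  G : ℕ → V → V → ℕ
  M : ℕ → Finset (Sym2 V)
  init : G 0 = w0
  step : ∀ k, G (k + 1) = removeMatching (G k) (M k)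
  matching : ∀ k, IsMatching (G k) (M k)
  opt : ∀ k, ∀ M' : Finset (Sym2 V), IsMatching (G k) M' →
    matchWeight (lcnsbWeight (G k) (Ufun M k)) M' ≤
      matchWeight (lcnsbWeight (G k) (Ufun M k)) (M k)

end NSBPaper

namespace NSBPaper

variable {V : Type}

lemma support_adj_of_ne_zero {w : V → V → ℕ} (hsymm : ∀ u v, w u v = w v u)
    (hloop : ∀ v, w v v = 0) {u v : V} (h : w u v ≠ 0) : (support w).Adj u v :=
  ⟨fun huv => h (huv ▸ hloop u), Nat.one_le_iff_ne_zero.mpr h,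
    Nat.one_le_iff_ne_zero.mpr (hsymm u v ▸ h)⟩

lemma BipartiteOn.mono {G : SimpleGraph V} {Z Z' : Set V} (h : BipartiteOn G Z) (hZ' : Z' ⊆ Z) :
    BipartiteOn G Z' :=
  let ⟨A, hA⟩ := h
  ⟨A, fun _ _ hu hv => hA (hZ' hu) (hZ' hv)⟩

lemma saturates_insert_iff {M : Finset (Sym2 V)} {e : Sym2 V} {x : V} :
    Saturates (insert e M) x ↔ x ∈ e ∨ Saturates M x := by
  simp [Saturates]

lemma IsMatching.insert {w : V → V → ℕ} {M : Finset (Sym2 V)} (hM : IsMatching w M) {u v : V}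
    (huv : (support w).Adj u v) (hu : ¬ Saturates M u) (hv : ¬ Saturates M v) :
    IsMatching w (insert s(u, v) M) := by
  obtain ⟨hdiag, hw, hdisj⟩ := hM
  have hfree : ∀ x ∈ s(u, v), ∀ f ∈ M, x ∉ f := by
    rintro x hx f hf hxf
    rcases Sym2.mem_iff.mp hx with rfl | rfl
    exacts [hu ⟨f, hf, hxf⟩, hv ⟨f, hf, hxf⟩]
  refine ⟨?_, ?_, ?_⟩
  · rintro e he
    rcases Finset.mem_insert.mp he with rfl | he
    exacts [Sym2.mk_isDiag_iff.not.mpr huv.ne, hdiag e he]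
  · intro a b hab
    rcases Finset.mem_insert.mp hab with h | h
    · rcases Sym2.eq_iff.mp h with ⟨rfl, rfl⟩ | ⟨rfl, rfl⟩
      exacts [huv.2.1, huv.2.2]
    · exact hw a b h
  · intro e he f hf hef x hxe hxf
    rcases Finset.mem_insert.mp he with rfl | he <;> rcases Finset.mem_insert.mp hf with rfl | hf
    exacts [hef rfl, hfree x hxe f hf hxf, hfree x hxf e he hxe, hdisj e he f hf hef x hxe hxf]

lemma exists_isMatching_of_image_eq {w : V → V → ℕ} {f : V → V} {S : Finset V}
    (hbip : BipartiteOn (support w) S) (hinj : Set.InjOn f S) (himg : S.image f = S)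
    (hadj : ∀ z ∈ S, (support w).Adj z (f z)) :
    ∃ M, IsMatching w M ∧ ∀ x, Saturates M x ↔ x ∈ S := by
  obtain ⟨A, hA⟩ := hbip
  have hmaps : ∀ z ∈ S, f z ∈ S := fun z hz => himg ▸ Finset.mem_image_of_mem f hz
  have hswap : ∀ z ∈ S, (z ∈ A ↔ f z ∉ A) := fun z hz => hA hz (hmaps z hz) (hadj z hz)
  refine ⟨(S.filter (· ∈ A)).image fun z => s(z, f z), ⟨?_, ?_, ?_⟩, fun x => ⟨?_, fun hx => ?_⟩⟩
  · simp only [Finset.mem_image, Finset.mem_filter]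
    rintro _ ⟨z, ⟨hz, -⟩, rfl⟩
    exact Sym2.mk_isDiag_iff.not.mpr (hadj z hz).ne
  · simp only [Finset.mem_image, Finset.mem_filter]
    rintro a b ⟨z, ⟨hz, -⟩, h⟩
    rcases Sym2.eq_iff.mp h with ⟨rfl, rfl⟩ | ⟨rfl, rfl⟩
    exacts [(hadj _ hz).2.1, (hadj _ hz).2.2]
  · simp only [Finset.mem_image, Finset.mem_filter]
    rintro _ ⟨z, ⟨hz, hzA⟩, rfl⟩ _ ⟨y, ⟨hy, hyA⟩, rfl⟩ hne x hxz hxy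
    have hfz := (hswap z hz).mp hzA
    have hfy := (hswap y hy).mp hyA
    rcases Sym2.mem_iff.mp hxz with rfl | rfl <;> rcases Sym2.mem_iff.mp hxy with h | h
    · exact hne (h ▸ rfl)
    · exact hfy (h ▸ hzA)
    · exact hfz (h ▸ hyA)
    · exact hne (hinj hz hy h ▸ rfl)
  · rintro ⟨_, he, hx⟩
    obtain ⟨z, hz, rfl⟩ := Finset.mem_image.mp he
    rcases Sym2.mem_iff.mp hx with rfl | rfl
    exacts [(Finset.mem_filter.mp hz).1, hmaps z (Finset.mem_filter.mp hz).1]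
  · by_cases hxA : x ∈ A
    · exact ⟨s(x, f x), Finset.mem_image_of_mem _ (Finset.mem_filter.mpr ⟨hx, hxA⟩),
        Sym2.mem_mk_left x (f x)⟩
    · obtain ⟨y, hy, rfl⟩ := Finset.mem_image.mp (himg.symm ▸ hx)
      have hyA : y ∈ A := (hswap y hy).mpr hxA
      exact ⟨s(y, f y), Finset.mem_image_of_mem _ (Finset.mem_filter.mpr ⟨hy, hyA⟩),
        Sym2.mem_mk_right y (f y)⟩

/-- If some `z₀ ∈ S` is not of the form `f z`, the edge `s(z₀, f z₀)` is added to a matching for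
`S \ {z₀, f z₀}`, which avoids both ends by the last conjunct; otherwise `f` permutes `S`. -/
lemma exists_isMatching_saturating_of_injOn {w : V → V → ℕ} {f : V → V} (S : Finset V)
    (hbip : BipartiteOn (support w) S) (hinj : Set.InjOn f S)
    (hadj : ∀ z ∈ S, (support w).Adj z (f z)) :
    ∃ M, IsMatching w M ∧ (∀ z ∈ S, Saturates M z) ∧
      ∀ x, Saturates M x → x ∈ S ∨ ∃ z ∈ S, f z = x := by
  induction S using Finset.strongInduction with
  | H S ih =>
  by_cases hstart : ∃ z₀ ∈ S, z₀ ∉ S.image f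
  · obtain ⟨z₀, hz₀, hz₀f⟩ := hstart
    set S' := (S.erase z₀).erase (f z₀)
    have hS'S : S' ⊆ S := (Finset.erase_subset _ _).trans (Finset.erase_subset _ _)
    have hz₀S' : z₀ ∉ S' := fun h => (Finset.mem_erase.mp (Finset.mem_of_mem_erase h)).1 rfl
    have hfz₀S' : f z₀ ∉ S' := fun h => (Finset.mem_erase.mp h).1 rfl
    obtain ⟨M, hM, hsat, hsupp⟩ := ih S' ⟨hS'S, fun h => hz₀S' (h hz₀)⟩
      (hbip.mono (Finset.coe_subset.mpr hS'S)) (hinj.mono (Finset.coe_subset.mpr hS'S))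
      fun z hz => hadj z (hS'S hz)
    have hz₀M : ¬ Saturates M z₀ := fun h => by
      rcases hsupp z₀ h with h | ⟨z, hz, hfz⟩
      exacts [hz₀S' h, hz₀f (Finset.mem_image.mpr ⟨z, hS'S hz, hfz⟩)]
    have hfz₀M : ¬ Saturates M (f z₀) := fun h => by
      rcases hsupp (f z₀) h with h | ⟨z, hz, hfz⟩
      exacts [hfz₀S' h, hz₀S' (hinj (hS'S hz) hz₀ hfz ▸ hz)]
    refine ⟨insert s(z₀, f z₀) M, hM.insert (hadj z₀ hz₀) hz₀M hfz₀M, fun z hz => ?_,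
      fun x hx => ?_⟩
    · rw [saturates_insert_iff]
      by_cases h₀ : z = z₀
      · exact Or.inl (h₀ ▸ Sym2.mem_mk_left z₀ (f z₀))
      by_cases h₁ : z = f z₀
      · exact Or.inl (h₁ ▸ Sym2.mem_mk_right z₀ (f z₀))
      exact Or.inr (hsat z (Finset.mem_erase.mpr ⟨h₁, Finset.mem_erase.mpr ⟨h₀, hz⟩⟩))
    · rcases saturates_insert_iff.mp hx with hx | hx
      · rcases Sym2.mem_iff.mp hx with rfl | rfl
        exacts [Or.inl hz₀, Or.inr ⟨z₀, hz₀, rfl⟩]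
      · rcases hsupp x hx with h | ⟨z, hz, hfz⟩
        exacts [Or.inl (hS'S h), Or.inr ⟨z, hS'S hz, hfz⟩]
  · push Not at hstart
    have himg : S.image f = S := (Finset.eq_of_subset_of_card_le hstart Finset.card_image_le).symm
    obtain ⟨M, hM, hsat⟩ := exists_isMatching_of_image_eq hbip hinj himg hadj
    exact ⟨M, hM, fun z hz => (hsat z).mpr hz, fun x hx => Or.inl ((hsat x).mp hx)⟩

section Degree

variable [Fintype V]

lemma deg_le_maxDeg (w : V → V → ℕ) (v : V) : deg w v ≤ maxDeg w :=
  Finset.le_sup (f := deg w) (Finset.mem_univ v)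

lemma sum_deg_le_sum_deg_of_neighbors_subset {w : V → V → ℕ} (hsymm : ∀ u v, w u v = w v u)
    {s T : Finset V} (hT : ∀ v ∈ s, ∀ u, w v u ≠ 0 → u ∈ T) :
    ∑ v ∈ s, deg w v ≤ ∑ u ∈ T, deg w u :=
  calc ∑ v ∈ s, deg w v = ∑ v ∈ s, ∑ u ∈ T, w v u :=
        Finset.sum_congr rfl fun v hv => (Finset.sum_subset (Finset.subset_univ T)
          fun u _ hu => by_contra fun h => hu (hT v hv u h)).symm
    _ = ∑ u ∈ T, ∑ v ∈ s, w u v := by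
        rw [Finset.sum_comm]
        simp only [hsymm]
    _ ≤ ∑ u ∈ T, deg w u :=
        Finset.sum_le_sum fun u _ => Finset.sum_le_sum_of_subset (Finset.subset_univ s)

lemma card_le_card_neighbors_of_deg_eq_maxDeg {w : V → V → ℕ} (hsymm : ∀ u v, w u v = w v u)
    (hloop : ∀ v, w v v = 0) (hΔ : 1 ≤ maxDeg w) {s : Finset V}
    (hs : ∀ v ∈ s, deg w v = maxDeg w) :
    s.card ≤ (Finset.univ.filter fun u => ∃ v ∈ s, (support w).Adj v u).card := by
  set N := Finset.univ.filter fun u => ∃ v ∈ s, (support w).Adj v u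
  have hN : ∀ v ∈ s, ∀ u, w v u ≠ 0 → u ∈ N := fun v hv u h =>
    Finset.mem_filter.mpr ⟨Finset.mem_univ u, v, hv, support_adj_of_ne_zero hsymm hloop h⟩
  refine Nat.le_of_mul_le_mul_left ?_ hΔ
  calc maxDeg w * s.card = ∑ v ∈ s, deg w v := by
        rw [Finset.sum_congr rfl hs, Finset.sum_const, smul_eq_mul, mul_comm]
    _ ≤ ∑ u ∈ N, deg w u := sum_deg_le_sum_deg_of_neighbors_subset hsymm hN
    _ ≤ ∑ u ∈ N, maxDeg w := Finset.sum_le_sum fun u _ => deg_le_maxDeg w u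
    _ = maxDeg w * N.card := by rw [Finset.sum_const, smul_eq_mul, mul_comm]

lemma exists_injOn_adj_of_deg_eq_maxDeg {w : V → V → ℕ} (hsymm : ∀ u v, w u v = w v u)
    (hloop : ∀ v, w v v = 0) (hΔ : 1 ≤ maxDeg w) :
    ∃ f : V → V, Set.InjOn f {v | deg w v = maxDeg w} ∧
      ∀ z, deg w z = maxDeg w → (support w).Adj z (f z) := by
  obtain ⟨g, hg_inj, hg_adj⟩ := (Fintype.all_card_le_filter_rel_iff_exists_injective
      fun (z : {v // deg w v = maxDeg w}) u => (support w).Adj z u).mp fun A => by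
    simpa [Finset.card_map] using card_le_card_neighbors_of_deg_eq_maxDeg hsymm hloop hΔ
      (s := A.map (Function.Embedding.subtype _))
      fun _ hv => by obtain ⟨z, -, rfl⟩ := Finset.mem_map.mp hv; exact z.2
  refine ⟨fun v => if h : deg w v = maxDeg w then g ⟨v, h⟩ else v, ?_, fun z hz => ?_⟩
  · intro a (ha : deg w a = maxDeg w) b (hb : deg w b = maxDeg w) hab
    simp only [dif_pos ha, dif_pos hb] at hab
    exact congrArg Subtype.val (hg_inj hab)
  · simpa [dif_pos hz] using hg_adj ⟨z, hz⟩

end Degree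

theorem maxdeg_bipartite_saturating_matching_general {V : Type} [Fintype V]
    (w : V → V → ℕ) (hsymm : ∀ u v, w u v = w v u) (hloop : ∀ v, w v v = 0)
    (hΔ : 1 ≤ maxDeg w)
    (hbip : BipartiteOn (support w) {v | deg w v = maxDeg w}) :
    ∃ M : Finset (Sym2 V), IsMatching w M ∧
      ∀ v : V, deg w v = maxDeg w → Saturates M v := by
  obtain ⟨f, hinj, hadj⟩ := exists_injOn_adj_of_deg_eq_maxDeg hsymm hloop hΔ
  have hZ : ((Finset.univ.filter fun v => deg w v = maxDeg w : Finset V) : Set V) =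
      {v | deg w v = maxDeg w} := by
    simp
  obtain ⟨M, hM, hsat, -⟩ := exists_isMatching_saturating_of_injOn _ (hZ ▸ hbip) (hZ ▸ hinj)
    fun z hz => hadj z (Finset.mem_filter.mp hz).2
  exact ⟨M, hM, fun v hv => hsat v (Finset.mem_filter.mpr ⟨Finset.mem_univ v, hv⟩)⟩

/-- If the subgraph of the support induced by the vertices of maximum degree
is bipartite, then some matching saturates every vertex of maximum degree. -/
theorem maxdeg_bipartite_saturating_matching {V : Type} [Fintype V] [DecidableEq V]
    (w : V → V → ℕ) (hsymm : ∀ u v, w u v = w v u) (hloop : ∀ v, w v v = 0)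
    (hΔ : 1 ≤ maxDeg w)
    (hbip : BipartiteOn (support w) {v | deg w v = maxDeg w}) :
    ∃ M : Finset (Sym2 V), IsMatching w M ∧
      ∀ v : V, deg w v = maxDeg w → Saturates M v :=
  maxdeg_bipartite_saturating_matching_general w hsymm hloop hΔ hbip

end NSBPaper
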